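/- arXiv:1510.07086 — 6 statements merged into one kernel-verified Lean document; each statement's English description precedes it below -/
import Mathlib

section
/- Suppose G ∈ SL(2,ℝ) satisfies |Trace(G)| > 6. Then there exists an invertible 2×2 real matrix B with |det B| = 1 such that G = B · diag(ρ, ρ⁻¹) · B⁻¹, where ρ, ρ⁻¹ are the real eigenvalues of G, and ‖B‖ ≤ 2 sqrt(‖G‖) / sqrt(|Trace(G)| − 2). -/
/-!
Write `G = !![a, b; c, d]` and let `p` solve `p ^ 2 = (d - a) * p + b * c`. Then `v₁ = (b, p)` and
`v₂ = (-p, c)` are eigenvectors of `G` for `a + p` and `d - p = (a + p)⁻¹`, and they span a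
parallelogram of area `p ^ 2 + b * c`, which is positive for a suitable choice of the root.
Scaling them by `x`, `y` with `x * y * (p ^ 2 + b * c) = 1` gives `det B = 1`, and balancing the
two columns brings the Frobenius norm of `B`, hence `‖B‖ ^ 2`, down to
`2 * |v₁| * |v₂| / (p ^ 2 + b * c)`. The identity
`|v₁| ^ 2 * |v₂| ^ 2 = (p ^ 2 + b * c) ^ 2 + p ^ 2 * (b - c) ^ 2` with
`(p ^ 2 + b * c) ^ 2 = p ^ 2 * (tr G ^ 2 - 4)`, together with
`tr G ^ 2 + (b - c) ^ 2 ≤ 4 * ‖G‖ ^ 2` (from the column norms of `G`), gives the bound.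
-/

open Matrix
open scoped Matrix.Norms.L2Operator

namespace Matrix

variable {𝕜 m n : Type*} [RCLike 𝕜] [Fintype m] [Fintype n] [DecidableEq n]

theorem l2_opNorm_le_sqrt_sum_sq (A : Matrix m n 𝕜) :
    ‖A‖ ≤ √(∑ i, ∑ j, ‖A i j‖ ^ 2) := by
  rw [l2_opNorm_def]
  refine ContinuousLinearMap.opNorm_le_bound _ (Real.sqrt_nonneg _) fun x => ?_
  rw [← Real.sqrt_sq (norm_nonneg x), ← Real.sqrt_mul (by positivity)]
  apply Real.le_sqrt_of_sq_le
  rw [EuclideanSpace.norm_sq_eq, EuclideanSpace.norm_sq_eq, Finset.sum_mul]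
  refine Finset.sum_le_sum fun i _ => ?_
  calc ‖∑ j, A i j * x j‖ ^ 2 ≤ (∑ j, ‖A i j‖ * ‖x j‖) ^ 2 := by
        gcongr
        exact (norm_sum_le _ _).trans_eq (by simp [norm_mul])
    _ ≤ (∑ j, ‖A i j‖ ^ 2) * ∑ j, ‖x j‖ ^ 2 := Finset.sum_mul_sq_le_sq_mul_sq _ _ _

theorem sum_sq_norm_col_le_l2_opNorm_sq (A : Matrix m n 𝕜) (j : n) :
    ∑ i, ‖A i j‖ ^ 2 ≤ ‖A‖ ^ 2 := by
  have h := A.l2_opNorm_mulVec (EuclideanSpace.single j 1)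
  rw [PiLp.norm_single, norm_one, mul_one] at h
  have := pow_le_pow_left₀ (norm_nonneg _) h 2
  rw [EuclideanSpace.norm_sq_eq] at this
  simpa [mulVec_single] using this

theorem l2_opNorm_fin_two_le (a b c d : ℝ) :
    ‖!![a, b; c, d]‖ ≤ √(a ^ 2 + b ^ 2 + c ^ 2 + d ^ 2) := by
  simpa [Fin.sum_univ_two, add_assoc] using (!![a, b; c, d]).l2_opNorm_le_sqrt_sum_sq

theorem sq_add_sq_le_four_mul_l2_opNorm_fin_two_sq (a b c d : ℝ) :
    (a + d) ^ 2 + (b - c) ^ 2 ≤ 4 * ‖!![a, b; c, d]‖ ^ 2 := by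
  have h₀ := (!![a, b; c, d]).sum_sq_norm_col_le_l2_opNorm_sq 0
  have h₁ := (!![a, b; c, d]).sum_sq_norm_col_le_l2_opNorm_sq 1
  simp only [Fin.sum_univ_two, of_apply, cons_val', cons_val_zero, cons_val_one,
    empty_val', cons_val_fin_one, Real.norm_eq_abs, sq_abs] at h₀ h₁
  nlinarith [sq_nonneg (a - d), sq_nonneg (b + c)]

end Matrix

section Eigenbasis

variable {a b c d p : ℝ}

def eigenbasis (b c p x y : ℝ) : Matrix (Fin 2) (Fin 2) ℝ :=
  !![x * b, -(y * p); x * p, y * c]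

theorem exists_root_sq_add_pos (hdet : a * d - b * c = 1) (htr : 2 < |a + d|) :
    ∃ p : ℝ, p ^ 2 = (d - a) * p + b * c ∧ 0 < p ^ 2 + b * c := by
  have hdisc : 0 < (a + d) ^ 2 - 4 := by nlinarith [sq_abs (a + d), abs_nonneg (a + d)]
  set δ := √((a + d) ^ 2 - 4)
  have hδ : 0 < δ := Real.sqrt_pos.2 hdisc
  have hδ2 : δ ^ 2 = (a + d) ^ 2 - 4 := Real.sq_sqrt hdisc.le
  -- `p ^ 2 + b * c = p * (2 * p - (d - a))`: take the root of the same sign as `d - a`.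
  rcases le_total 0 (d - a) with h | h
  · exact ⟨(d - a + δ) / 2, by linear_combination hδ2 / 4 + hdet, by nlinarith⟩
  · exact ⟨(d - a - δ) / 2, by linear_combination hδ2 / 4 + hdet, by nlinarith⟩

theorem add_mul_sub_eq_one (hdet : a * d - b * c = 1) (hp : p ^ 2 = (d - a) * p + b * c) :
    (a + p) * (d - p) = 1 := by
  linear_combination hdet - hp

theorem fin_two_mul_eigenbasis (hp : p ^ 2 = (d - a) * p + b * c) (x y : ℝ) :
    !![a, b; c, d] * eigenbasis b c p x y = eigenbasis b c p x y * diagonal ![a + p, d - p] := by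
  ext i j
  fin_cases i <;> fin_cases j <;> simp [eigenbasis, mul_apply, Fin.sum_univ_two]
  · ring
  · linear_combination -y * hp
  · linear_combination -x * hp
  · ring

theorem det_eigenbasis (x y : ℝ) : (eigenbasis b c p x y).det = x * y * (p ^ 2 + b * c) := by
  rw [eigenbasis, det_fin_two_of]
  ring

theorem two_mul_sqrt_div_le {N : ℝ} (hdet : a * d - b * c = 1)
    (hp : p ^ 2 = (d - a) * p + b * c) (htr : 2 < |a + d|) (hD : 0 < p ^ 2 + b * c)
    (hN₀ : 0 ≤ N) (hN : (a + d) ^ 2 + (b - c) ^ 2 ≤ 4 * N ^ 2) :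
    2 * √((b ^ 2 + p ^ 2) * (c ^ 2 + p ^ 2)) / (p ^ 2 + b * c) ≤ 4 * N / (|a + d| - 2) := by
  have hsq : (p ^ 2 + b * c) ^ 2 = p ^ 2 * ((a + d) ^ 2 - 4) := by
    linear_combination (2 * p * (d - a) + (p ^ 2 - (d - a) * p - b * c)) * hp - 4 * p ^ 2 * hdet
  rw [← sq_abs (a + d)] at hsq hN
  set s := |a + d|
  have key : (s ^ 2 - 4 + (b - c) ^ 2) * (s - 2) ≤ 4 * N ^ 2 * (s + 2) := by
    nlinarith [mul_le_mul_of_nonneg_right hN (sub_nonneg.2 htr.le), sq_nonneg N]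
  have hprod : (b ^ 2 + p ^ 2) * (c ^ 2 + p ^ 2) * (s - 2) ^ 2 ≤ (2 * N * (p ^ 2 + b * c)) ^ 2 :=
    calc (b ^ 2 + p ^ 2) * (c ^ 2 + p ^ 2) * (s - 2) ^ 2
        = p ^ 2 * (s - 2) * ((s ^ 2 - 4 + (b - c) ^ 2) * (s - 2)) := by
          linear_combination (s - 2) ^ 2 * hsq
      _ ≤ p ^ 2 * (s - 2) * (4 * N ^ 2 * (s + 2)) := by gcongr
      _ = (2 * N * (p ^ 2 + b * c)) ^ 2 := by rw [mul_pow, hsq]; ring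
  rw [← Real.sq_sqrt (by positivity : 0 ≤ (b ^ 2 + p ^ 2) * (c ^ 2 + p ^ 2)), ← mul_pow]
    at hprod
  have hs : 0 ≤ s - 2 := by linarith
  have := (pow_le_pow_iff_left₀ (by positivity) (by positivity) two_ne_zero).1 hprod
  rw [div_le_div_iff₀ hD (by linarith)]
  linarith

end Eigenbasis

theorem exists_mul_mul_eq_one_and_sq_mul_add_sq_mul_eq {α β D : ℝ} (hα : 0 < α) (hβ : 0 < β)
    (hD : 0 < D) :
    ∃ x y : ℝ, x * y * D = 1 ∧ x ^ 2 * α + y ^ 2 * β = 2 * √(α * β) / D := by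
  have hr2 : √(α * β) ^ 2 = α * β := Real.sq_sqrt (by positivity)
  set x := √(√(α * β) / (α * D))
  have hx : 0 < x := by positivity
  have hx2 : x ^ 2 = √(α * β) / (α * D) := Real.sq_sqrt (by positivity)
  refine ⟨x, (x * D)⁻¹, by field_simp, ?_⟩
  rw [inv_pow, mul_pow, hx2]
  field_simp
  linear_combination -hr2

/-- If `G ∈ SL(2,ℝ)` with `|Trace G| > 6`, then `G` is diagonalizable by a matrix `B`
with `|det B| = 1` and `‖B‖ ≤ 2√‖G‖ / √(|Trace G| − 2)`. -/
theorem stmt_2 (G : Matrix (Fin 2) (Fin 2) ℝ) (hG : G.det = 1)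
    (htr : 6 < |G.trace|) :
    ∃ ρ : ℝ, ρ + ρ⁻¹ = G.trace ∧
      ∃ B : Matrix (Fin 2) (Fin 2) ℝ, IsUnit B.det ∧ |B.det| = 1 ∧
        G = B * Matrix.diagonal ![ρ, ρ⁻¹] * B⁻¹ ∧
        ‖B‖ ≤ 2 * Real.sqrt ‖G‖ / Real.sqrt (|G.trace| - 2) := by
  obtain ⟨a, b, c, d, rfl⟩ : ∃ a b c d : ℝ, G = !![a, b; c, d] :=
    ⟨_, _, _, _, G.eta_fin_two⟩
  rw [det_fin_two_of] at hG
  rw [trace_fin_two_of] at htr ⊢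
  have htr₂ : 2 < |a + d| := by linarith
  obtain ⟨p, hp, hD⟩ := exists_root_sq_add_pos hG htr₂
  obtain ⟨x, y, hxy, hbal⟩ := exists_mul_mul_eq_one_and_sq_mul_add_sq_mul_eq
    (α := b ^ 2 + p ^ 2) (β := c ^ 2 + p ^ 2) (by nlinarith [sq_nonneg c, sq_nonneg p])
    (by nlinarith [sq_nonneg b, sq_nonneg p]) hD
  have hρ : (a + p)⁻¹ = d - p := inv_eq_of_mul_eq_one_right (add_mul_sub_eq_one hG hp)
  have hdetB : (eigenbasis b c p x y).det = 1 := by rw [det_eigenbasis, hxy]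
  refine ⟨a + p, by rw [hρ]; ring, eigenbasis b c p x y, by simp [hdetB], by simp [hdetB],
    ?_, ?_⟩
  · rw [hρ, ← fin_two_mul_eigenbasis hp, mul_nonsing_inv_cancel_right _ _ (by simp [hdetB])]
  · calc ‖eigenbasis b c p x y‖
        ≤ √((x * b) ^ 2 + (-(y * p)) ^ 2 + (x * p) ^ 2 + (y * c) ^ 2) := l2_opNorm_fin_two_le ..
      _ = √(2 * √((b ^ 2 + p ^ 2) * (c ^ 2 + p ^ 2)) / (p ^ 2 + b * c)) := by
        rw [← hbal]; ring_nf
      _ ≤ √(4 * ‖!![a, b; c, d]‖ / (|a + d| - 2)) := Real.sqrt_le_sqrt <|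
          two_mul_sqrt_div_le hG hp htr₂ hD (norm_nonneg _)
            (sq_add_sq_le_four_mul_l2_opNorm_fin_two_sq ..)
      _ = 2 * √‖!![a, b; c, d]‖ / √(|a + d| - 2) := by
        rw [Real.sqrt_div' _ (by linarith), Real.sqrt_mul' _ (norm_nonneg _),
          show (4 : ℝ) = 2 ^ 2 by norm_num, Real.sqrt_sq zero_le_two]
end

section
/- Let G be a 2×2 real matrix and N a positive integer such that ‖G^j‖ ≤ M for all 0 < j ≤ N, where M ≥ 1. Let G_j = G + Δ_j for j = 1,…,N with δ = max_{1 ≤ j ≤ N} ‖Δ_j‖. If N·M·δ < 1/2, then for every n ≤ N, ‖G_n · G_{n−1} ⋯ G_1 − G^n‖ ≤ 2 N M² δ. -/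
/-!
Writing `Q n = (G + Δ_n) ⋯ (G + Δ_1)`, the difference `Q n - G ^ n` telescopes to
`∑_{j < n} G ^ (n - 1 - j) Δ_{j+1} Q j`, so `‖Q n - G ^ n‖ ≤ n M δ · max_{j < n} ‖Q j‖`.
By strong induction `‖Q j‖ ≤ ‖G ^ j‖ + 2 N M² δ ≤ M + M = 2 M` for the earlier products,
where `2 N M δ < 1` is exactly the smallness hypothesis; hence `‖Q n - G ^ n‖ ≤ 2 N M² δ`.
-/

open scoped Matrix.Norms.L2Operator

open Finset

variable {R : Type*}

def descProd [Monoid R] (A : ℕ → R) : ℕ → R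
  | 0 => 1
  | n + 1 => A (n + 1) * descProd A n

theorem list_ofFn_prod_eq_descProd [Monoid R] (A : ℕ → R) (n : ℕ) :
    (List.ofFn fun i : Fin n => A (n - i)).prod = descProd A n := by
  induction n with
  | zero => rfl
  | succ n ih =>
    simp only [List.ofFn_succ, List.prod_cons, Fin.val_zero, Nat.sub_zero, Fin.val_succ,
      Nat.add_sub_add_right, ih, descProd]

theorem descProd_sub_pow [Ring R] (A : ℕ → R) (G : R) (n : ℕ) :
    descProd A n - G ^ n = ∑ j ∈ range n, G ^ (n - 1 - j) * (A (j + 1) - G) * descProd A j := by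
  induction n with
  | zero => simp [descProd]
  | succ n ih =>
    have step : descProd A (n + 1) - G ^ (n + 1) =
        G * (descProd A n - G ^ n) + (A (n + 1) - G) * descProd A n := by
      rw [descProd, pow_succ']
      noncomm_ring
    rw [step, ih, mul_sum, sum_range_succ, Nat.add_sub_cancel, Nat.sub_self, pow_zero, one_mul]
    congr 1
    refine sum_congr rfl fun j hj => ?_
    have hexp : n - 1 - j + 1 = n - j := by have := mem_range.mp hj; omega
    rw [← mul_assoc, ← mul_assoc, ← pow_succ', hexp]

section NormedRing

variable [NormedRing R] {A : ℕ → R} {G : R}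

theorem norm_descProd_sub_pow_le {n : ℕ} {M δ K : ℝ} (hG : ∀ k < n, ‖G ^ k‖ ≤ M)
    (hA : ∀ j < n, ‖A (j + 1) - G‖ ≤ δ) (hQ : ∀ j < n, ‖descProd A j‖ ≤ K) :
    ‖descProd A n - G ^ n‖ ≤ n * (M * δ * K) := by
  rw [descProd_sub_pow]
  have hterm : ∀ j ∈ range n, ‖G ^ (n - 1 - j) * (A (j + 1) - G) * descProd A j‖ ≤ M * δ * K := by
    intro j hj
    have hjn := mem_range.mp hj
    have hGj := hG (n - 1 - j) (by omega)
    have hAj := hA j hjn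
    have hM : 0 ≤ M := (norm_nonneg _).trans hGj
    have hδ : 0 ≤ δ := (norm_nonneg _).trans hAj
    calc _ ≤ ‖G ^ (n - 1 - j)‖ * ‖A (j + 1) - G‖ * ‖descProd A j‖ := norm_mul₃_le
      _ ≤ M * δ * K := by gcongr; exact hQ j hjn
  simpa using norm_sum_le_of_le (range n) hterm

theorem norm_descProd_sub_pow_le_of_small {N : ℕ} {M δ : ℝ} (hG : ∀ k ≤ N, ‖G ^ k‖ ≤ M)
    (hA : ∀ j, 1 ≤ j → j ≤ N → ‖A j - G‖ ≤ δ) (hδ : 0 ≤ δ) (hsmall : N * M * δ < 1 / 2) :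
    ∀ n ≤ N, ‖descProd A n - G ^ n‖ ≤ 2 * N * M ^ 2 * δ := by
  have hM : 0 ≤ M := (norm_nonneg _).trans (hG 0 N.zero_le)
  intro n
  induction n using Nat.strong_induction_on with
  | _ n ih =>
    intro hn
    have hQ : ∀ j < n, ‖descProd A j‖ ≤ 2 * M := by
      intro j hj
      have hdiff := ih j hj (by omega)
      have hpow := hG j (by omega)
      calc ‖descProd A j‖ ≤ ‖descProd A j - G ^ j‖ + ‖G ^ j‖ := norm_le_norm_sub_add _ _
        _ ≤ 2 * M := by nlinarith
    have hnN : (n : ℝ) ≤ N := by exact_mod_cast hn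
    calc ‖descProd A n - G ^ n‖ ≤ n * (M * δ * (2 * M)) :=
          norm_descProd_sub_pow_le (fun k hk => hG k (by omega))
            (fun j hj => hA (j + 1) (by omega) (by omega)) hQ
      _ ≤ N * (M * δ * (2 * M)) := by gcongr
      _ = 2 * N * M ^ 2 * δ := by ring

end NormedRing

/-- Perturbation of matrix products: if `‖G^j‖ ≤ M` for `0 < j ≤ N`, `G_j = G + Δ_j` with
`‖Δ_j‖ ≤ δ`, and `N M δ < 1/2`, then `‖G_n ⋯ G_1 − G^n‖ ≤ 2 N M² δ` for all `n ≤ N`. -/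
theorem stmt_3 (G : Matrix (Fin 2) (Fin 2) ℝ) (N : ℕ) (hN : 0 < N)
    (M : ℝ) (hM : 1 ≤ M) (hGj : ∀ j : ℕ, 0 < j → j ≤ N → ‖G ^ j‖ ≤ M)
    (Δ : ℕ → Matrix (Fin 2) (Fin 2) ℝ) (δ : ℝ)
    (hδ : ∀ j : ℕ, 1 ≤ j → j ≤ N → ‖Δ j‖ ≤ δ)
    (hsmall : (N : ℝ) * M * δ < 1 / 2) :
    ∀ n : ℕ, n ≤ N →
      ‖(List.ofFn (fun i : Fin n => G + Δ (n - (i : ℕ)))).prod - G ^ n‖ ≤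
        2 * N * M ^ 2 * δ := by
  intro n hn
  have hpow : ∀ k ≤ N, ‖G ^ k‖ ≤ M := by
    rintro (_ | k) hk
    · simpa using hM
    · exact hGj _ k.succ_pos hk
  have hδ0 : 0 ≤ δ := (norm_nonneg _).trans (hδ 1 le_rfl hN)
  rw [list_ofFn_prod_eq_descProd (fun j => G + Δ j)]
  exact norm_descProd_sub_pow_le_of_small hpow (fun j h₁ h₂ => by simpa using hδ j h₁ h₂)
    hδ0 hsmall n hn
end

section
/- Let G be a 2×2 matrix, N a positive integer, M ≥ 1 with ‖G^j‖ ≤ M for all 0 < j ≤ N, and G_j = G + Δ_j with δ = max_j ‖Δ_j‖. If N·M·δ < 1, then any product of consecutive matrices G_{k_2} ⋯ G_{k_1} with 1 ≤ k_1 ≤ k_2 ≤ N has norm at most M/(1 − M δ N). -/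
/-!
Write `P n = G_{k₁+n-1} ⋯ G_{k₁}`. The discrete Duhamel formula
`P n = G ^ n + ∑_{j < n} G ^ (n-1-j) Δ_{k₁+j} P j` bounds `‖P n‖` by `M + n M δ C` as soon as all
earlier `‖P j‖` are at most `C`, so strong induction gives `‖P n‖ ≤ C` for the fixed point
`C = M + N M δ C`, i.e. `C = M / (1 - M δ N)`.
-/

open scoped Matrix.Norms.L2Operator

section LeftProd

variable {R : Type*}

/-- `leftProd A n = A (n - 1) * ⋯ * A 1 * A 0`. -/
def leftProd [Monoid R] (A : ℕ → R) (n : ℕ) : R :=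
  (List.ofFn fun i : Fin n => A (n - 1 - i)).prod

@[simp]
theorem leftProd_zero [Monoid R] (A : ℕ → R) : leftProd A 0 = 1 := rfl

theorem leftProd_succ [Monoid R] (A : ℕ → R) (n : ℕ) :
    leftProd A (n + 1) = A n * leftProd A n := by
  simp only [leftProd, List.ofFn_succ, List.prod_cons, Fin.val_zero, Fin.val_succ,
    Nat.add_sub_cancel, Nat.sub_zero]
  congr 3
  funext i
  congr 1
  omega

/-- Discrete Duhamel (variation of constants) formula. -/
theorem leftProd_add_eq_pow_add_sum [Ring R] (G : R) (D : ℕ → R) (n : ℕ) :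
    leftProd (fun k => G + D k) n =
      G ^ n + ∑ j ∈ Finset.range n, G ^ (n - 1 - j) * (D j * leftProd (fun k => G + D k) j) := by
  induction n with
  | zero => simp
  | succ n ih =>
    have hpow : ∀ j ∈ Finset.range n, G ^ (n + 1 - 1 - j) * (D j * leftProd (fun k => G + D k) j) =
        G * (G ^ (n - 1 - j) * (D j * leftProd (fun k => G + D k) j)) := by
      intro j hj
      rw [Finset.mem_range] at hj
      rw [show n + 1 - 1 - j = n - 1 - j + 1 by omega, pow_succ', mul_assoc]
    have hGP : G * leftProd (fun k => G + D k) n = G ^ (n + 1) +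
        G * ∑ j ∈ Finset.range n, G ^ (n - 1 - j) * (D j * leftProd (fun k => G + D k) j) := by
      rw [ih, mul_add, pow_succ']
    rw [Finset.sum_range_succ, Finset.sum_congr rfl hpow, ← Finset.mul_sum, leftProd_succ, add_mul,
      hGP, show n + 1 - 1 - n = 0 by omega, pow_zero, one_mul]
    abel

theorem norm_leftProd_add_le [NormedRing R] {G : R} {D : ℕ → R} {n : ℕ} {M δ : ℝ}
    (hG : ∀ j ≤ n, ‖G ^ j‖ ≤ M) (hD : ∀ j < n, ‖D j‖ ≤ δ) (hδ : 0 ≤ δ)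
    (hsmall : M * δ * n < 1) :
    ‖leftProd (fun k => G + D k) n‖ ≤ M / (1 - M * δ * n) := by
  set C := M / (1 - M * δ * n)
  have hden : 0 < 1 - M * δ * n := by linarith
  have hM : 0 ≤ M := (norm_nonneg _).trans (hG 0 (Nat.zero_le n))
  have hC : 0 ≤ C := by positivity
  have hfix : M + n * (M * (δ * C)) = C := by
    have hCden : C * (1 - M * δ * n) = M := div_mul_cancel₀ M hden.ne'
    linear_combination -hCden
  suffices ∀ m ≤ n, ‖leftProd (fun k => G + D k) m‖ ≤ C from this n le_rfl
  intro m
  induction m using Nat.strong_induction_on with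
  | _ m ih =>
    intro hm
    have hterm : ∀ j ∈ Finset.range m,
        ‖G ^ (m - 1 - j) * (D j * leftProd (fun k => G + D k) j)‖ ≤ M * (δ * C) := by
      intro j hj
      rw [Finset.mem_range] at hj
      refine (norm_mul_le _ _).trans (mul_le_mul (hG _ (by omega)) ?_ (norm_nonneg _) hM)
      exact (norm_mul_le _ _).trans
        (mul_le_mul (hD j (by omega)) (ih j hj (by omega)) (norm_nonneg _) hδ)
    have hmn : (m : ℝ) ≤ n := by exact_mod_cast hm
    calc ‖leftProd (fun k => G + D k) m‖
        ≤ ‖G ^ m‖ +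
            ∑ j ∈ Finset.range m, ‖G ^ (m - 1 - j) * (D j * leftProd (fun k => G + D k) j)‖ := by
          rw [leftProd_add_eq_pow_add_sum]
          exact (norm_add_le _ _).trans (add_le_add le_rfl (norm_sum_le _ _))
      _ ≤ M + m * (M * (δ * C)) := by
          refine add_le_add (hG m hm) ?_
          simpa using Finset.sum_le_sum hterm
      _ ≤ M + n * (M * (δ * C)) := by gcongr
      _ = C := hfix

end LeftProd

theorem stmt_4_general (G : Matrix (Fin 2) (Fin 2) ℝ) (N : ℕ)
    (M : ℝ) (hM : 1 ≤ M) (hGj : ∀ j : ℕ, 0 < j → j ≤ N → ‖G ^ j‖ ≤ M)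
    (Δ : ℕ → Matrix (Fin 2) (Fin 2) ℝ) (δ : ℝ) (hδ0 : 0 ≤ δ)
    (hδ : ∀ j : ℕ, 1 ≤ j → j ≤ N → ‖Δ j‖ ≤ δ)
    (hsmall : (N : ℝ) * M * δ < 1) :
    ∀ k₁ k₂ : ℕ, 1 ≤ k₁ → k₁ ≤ k₂ → k₂ ≤ N →
      ‖(List.ofFn (fun i : Fin (k₂ - k₁ + 1) => G + Δ (k₂ - (i : ℕ)))).prod‖ ≤
        M / (1 - M * δ * N) := by
  intro k₁ k₂ hk₁ hk₁₂ hk₂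
  set n := k₂ - k₁ + 1 with hn
  have hnN : (n : ℝ) ≤ N := by exact_mod_cast (by omega : n ≤ N)
  have hMδ : 0 ≤ M * δ := by positivity
  have hprod : (List.ofFn fun i : Fin n => G + Δ (k₂ - (i : ℕ))).prod =
      leftProd (fun k => G + Δ (k₁ + k)) n := by
    simp only [leftProd]
    congr 2
    funext i
    rw [show k₂ - (i : ℕ) = k₁ + (n - 1 - i) by omega]
  have hG : ∀ j ≤ n, ‖G ^ j‖ ≤ M := by
    intro j hj
    rcases j.eq_zero_or_pos with rfl | hj0
    · simpa using hM
    · exact hGj j hj0 (by omega)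
  rw [hprod]
  calc ‖leftProd (fun k => G + Δ (k₁ + k)) n‖ ≤ M / (1 - M * δ * n) :=
        norm_leftProd_add_le hG (fun j hj => hδ _ (by omega) (by omega)) hδ0
          (by linarith [mul_le_mul_of_nonneg_left hnN hMδ])
    _ ≤ M / (1 - M * δ * N) := by
        gcongr
        linarith [mul_le_mul_of_nonneg_left hnN hMδ]

/-- If `‖G^j‖ ≤ M` for `0 < j ≤ N`, `G_j = G + Δ_j` with `δ = max ‖Δ_j‖` and `N M δ < 1`,
then any product of consecutive matrices `G_{k₂} ⋯ G_{k₁}` with `1 ≤ k₁ ≤ k₂ ≤ N`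
has norm at most `M / (1 − M δ N)`. -/
theorem stmt_4 (G : Matrix (Fin 2) (Fin 2) ℝ) (N : ℕ) (hN : 0 < N)
    (M : ℝ) (hM : 1 ≤ M) (hGj : ∀ j : ℕ, 0 < j → j ≤ N → ‖G ^ j‖ ≤ M)
    (Δ : ℕ → Matrix (Fin 2) (Fin 2) ℝ) (δ : ℝ) (hδ0 : 0 ≤ δ)
    (hδ : ∀ j : ℕ, 1 ≤ j → j ≤ N → ‖Δ j‖ ≤ δ)
    (hsmall : (N : ℝ) * M * δ < 1) :
    ∀ k₁ k₂ : ℕ, 1 ≤ k₁ → k₁ ≤ k₂ → k₂ ≤ N →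
      ‖(List.ofFn (fun i : Fin (k₂ - k₁ + 1) => G + Δ (k₂ - (i : ℕ)))).prod‖ ≤
        M / (1 - M * δ * N) :=
  stmt_4_general G N M hM hGj Δ δ hδ0 hδ hsmall
end

section
/- Let u, v: {1,2,…} → ℂ be any sequences and for l ≥ 1 define ‖u‖_l² = Σ_{n=1}^{[l]} |u(n)|² + (l − [l]) |u([l]+1)|². Suppose for every n, the vectors (u(n+1), u(n)) and (v(n+1), v(n)) are the images of two orthonormal vectors in ℝ² under a common matrix A_n ∈ SL(2,ℝ). Then ‖u‖_l · ‖v‖_l ≥ ([l] − 1)/2. -/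
/-!
Since `Aₙ ∈ SL(2,ℝ)` and `X, Y` are orthonormal, the Wronskian `u(n+1) v(n) - u(n) v(n+1)`
equals `det Aₙ · det (X Y) = ±1`. Summing `1 ≤ |u(n+1)| |v(n)| + |u(n)| |v(n+1)|` over
`1 ≤ n < [l]` and applying Cauchy–Schwarz to each of the two shifted sums bounds `[l] - 1` by
`2 ‖u‖_{[l]} ‖v‖_{[l]}`, and the fractional terms of `‖·‖_l` are nonnegative.
-/

open Finset

theorem Matrix.mulVec_cross_fin_two {R : Type*} [CommRing R] (M : Matrix (Fin 2) (Fin 2) R)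
    (X Y : Fin 2 → R) :
    M.mulVec X 0 * M.mulVec Y 1 - M.mulVec X 1 * M.mulVec Y 0 =
      M.det * (X 0 * Y 1 - X 1 * Y 0) := by
  simp only [Matrix.mulVec, dotProduct, Fin.sum_univ_two, Matrix.det_fin_two]
  ring

theorem abs_cross_eq_one_of_orthonormal {X Y : Fin 2 → ℝ} (hX : X 0 ^ 2 + X 1 ^ 2 = 1)
    (hY : Y 0 ^ 2 + Y 1 ^ 2 = 1) (hXY : X 0 * Y 0 + X 1 * Y 1 = 0) :
    |X 0 * Y 1 - X 1 * Y 0| = 1 := by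
  refine (pow_eq_one_iff_of_nonneg (abs_nonneg _) two_ne_zero).1 ?_
  -- Lagrange's identity: cross² + dot² = |X|² |Y|²
  rw [sq_abs]
  linear_combination (Y 0 ^ 2 + Y 1 ^ 2) * hX + hY - (X 0 * Y 0 + X 1 * Y 1) * hXY

theorem sum_abs_mul_shift_le (u v : ℕ → ℝ) (m : ℕ) :
    ∑ n ∈ Ico 1 m, |u (n + 1) * v n| ≤
      √(∑ n ∈ Icc 1 m, u n ^ 2) * √(∑ n ∈ Icc 1 m, v n ^ 2) := by
  have hu : ∑ n ∈ Ico 1 m, u (n + 1) ^ 2 ≤ ∑ n ∈ Icc 1 m, u n ^ 2 := by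
    rw [sum_Ico_add' (fun n ↦ u n ^ 2)]
    exact sum_le_sum_of_subset_of_nonneg (fun n ↦ by simp only [mem_Ico, mem_Icc]; omega) fun _ _ _ ↦ sq_nonneg _
  have hv : ∑ n ∈ Ico 1 m, v n ^ 2 ≤ ∑ n ∈ Icc 1 m, v n ^ 2 :=
    sum_le_sum_of_subset_of_nonneg Ico_subset_Icc_self fun _ _ _ ↦ sq_nonneg _
  calc ∑ n ∈ Ico 1 m, |u (n + 1) * v n|
      = ∑ n ∈ Ico 1 m, |u (n + 1)| * |v n| := by simp only [abs_mul]
    _ ≤ √(∑ n ∈ Ico 1 m, |u (n + 1)| ^ 2) * √(∑ n ∈ Ico 1 m, |v n| ^ 2) :=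
      Real.sum_mul_le_sqrt_mul_sqrt _ _ _
    _ ≤ √(∑ n ∈ Icc 1 m, u n ^ 2) * √(∑ n ∈ Icc 1 m, v n ^ 2) := by
      simp only [sq_abs]
      gcongr

theorem sub_one_le_two_mul_sqrt_mul_sqrt {u v : ℕ → ℝ}
    (hw : ∀ n, 1 ≤ |u (n + 1) * v n - u n * v (n + 1)|) (m : ℕ) :
    (m : ℝ) - 1 ≤ 2 * (√(∑ n ∈ Icc 1 m, u n ^ 2) * √(∑ n ∈ Icc 1 m, v n ^ 2)) := by
  calc (m : ℝ) - 1 ≤ ∑ _n ∈ Ico 1 m, (1 : ℝ) := by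
        rw [sum_const, Nat.card_Ico, nsmul_one]
        rcases m with _ | m <;> simp
    _ ≤ ∑ n ∈ Ico 1 m, (|u (n + 1) * v n| + |v (n + 1) * u n|) := by
        gcongr with n
        calc 1 ≤ |u (n + 1) * v n - u n * v (n + 1)| := hw n
          _ ≤ |u (n + 1) * v n| + |v (n + 1) * u n| := by
            rw [mul_comm (v _)]; exact abs_sub _ _
    _ ≤ 2 * (√(∑ n ∈ Icc 1 m, u n ^ 2) * √(∑ n ∈ Icc 1 m, v n ^ 2)) := by
        rw [sum_add_distrib]
        linarith [sum_abs_mul_shift_le u v m, sum_abs_mul_shift_le v u m]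

/-- If `u, v` are solutions of the same second-order difference equation with orthonormal
initial data (i.e. `(u(n+1), u(n))ᵀ = Aₙ X`, `(v(n+1), v(n))ᵀ = Aₙ Y` with `Aₙ ∈ SL(2,ℝ)`
and `X, Y` orthonormal), then `‖u‖_l · ‖v‖_l ≥ ([l] − 1)/2`, where
`‖u‖_l² = Σ_{n=1}^{[l]} |u(n)|² + (l − [l]) |u([l]+1)|²`. -/
theorem stmt_9 (u v : ℕ → ℝ) (A : ℕ → Matrix (Fin 2) (Fin 2) ℝ)
    (X Y : Fin 2 → ℝ)
    (hX : X 0 ^ 2 + X 1 ^ 2 = 1) (hY : Y 0 ^ 2 + Y 1 ^ 2 = 1)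
    (hXY : X 0 * Y 0 + X 1 * Y 1 = 0)
    (hdet : ∀ n, (A n).det = 1)
    (hu : ∀ n, (A n).mulVec X = ![u (n + 1), u n])
    (hv : ∀ n, (A n).mulVec Y = ![v (n + 1), v n])
    (l : ℝ) (hl : 1 ≤ l) :
    ((⌊l⌋₊ : ℝ) - 1) / 2 ≤
      Real.sqrt ((∑ n ∈ Finset.Icc 1 ⌊l⌋₊, |u n| ^ 2) +
          (l - ⌊l⌋₊) * |u (⌊l⌋₊ + 1)| ^ 2) *
      Real.sqrt ((∑ n ∈ Finset.Icc 1 ⌊l⌋₊, |v n| ^ 2) +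
          (l - ⌊l⌋₊) * |v (⌊l⌋₊ + 1)| ^ 2) := by
  have hw : ∀ n, 1 ≤ |u (n + 1) * v n - u n * v (n + 1)| := fun n ↦ by
    have h := (A n).mulVec_cross_fin_two X Y
    simp only [hu, hv, hdet, one_mul, Matrix.cons_val_zero, Matrix.cons_val_one] at h
    rw [h, abs_cross_eq_one_of_orthonormal hX hY hXY]
  have hfrac : 0 ≤ l - ⌊l⌋₊ := sub_nonneg.2 (Nat.floor_le (by linarith))
  simp only [sq_abs]
  calc ((⌊l⌋₊ : ℝ) - 1) / 2
      ≤ √(∑ n ∈ Icc 1 ⌊l⌋₊, u n ^ 2) * √(∑ n ∈ Icc 1 ⌊l⌋₊, v n ^ 2) := by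
        linarith [sub_one_le_two_mul_sqrt_mul_sqrt hw ⌊l⌋₊]
    _ ≤ _ := by gcongr <;> exact le_add_of_nonneg_right (by positivity)
end

section
/- Fix β > 0. Define α = [0; a_1, a_2, …] with continued fraction coefficients chosen inductively: a_i = 1 for 1 ≤ i ≤ n_0 (n_0 large), and having defined denominators q_n via the recursion q_n = a_n q_{n−1} + q_{n−2}, set n_k = q_{n_0} + q_{n_1} + ⋯ + q_{n_{k−1}} and put a_n = ⌈e^{β q_{n_k}}⌉ if n = n_k + 1 and a_n = 1 otherwise. Then β(α) := limsup_n (log q_{n+1})/q_n = β > 0, while K_*(α) := liminf_k (a_1 a_2 ⋯ a_k)^{1/k} ≤ e^β < ∞. -/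
/-!
Away from the indices `n_k + 1` every partial quotient is `1`, and `a_{n_k+1} = ⌈e^{β q_{n_k}}⌉`,
so always `q_{n+1} ≤ (a_{n+1} + 1) q_n ≤ 3 q_n e^{β q_n}`, which gives `limsup ≤ β`, while at
`n = n_k` the bound `q_{n_k+1} ≥ a_{n_k+1} ≥ e^{β q_{n_k}}` gives `log q_{n+1} / q_n ≥ β`.

For the geometric means, the only partial quotients up to `n_m` that differ from `1` are the
`a_{n_k+1} ≤ e^{β q_{n_k} + 1}` with `k < m`. Since `n_m = q_{n_0} + ⋯ + q_{n_{m-1}}`, their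
product is at most `e^{β n_m + m}`, and `n_m` at least doubles at each step, so the `n_m`-th roots
are at most `e^{β + m / n_m} → e^β`.
-/

open Filter Real Topology Finset

section LimitBounds

variable {ι κ : Type*} {f : Filter ι}

theorem limsup_eq_of_frequently_ge_of_le_tendsto {u v : ι → ℝ} {b : ℝ}
    (hu : ∃ᶠ i in f, b ≤ u i) (huv : ∀ᶠ i in f, u i ≤ v i) (hv : Tendsto v f (𝓝 b)) :
    limsup u f = b := by
  have : f.NeBot := ⟨fun hbot => frequently_bot (hbot ▸ hu)⟩
  refine le_antisymm ?_ (le_limsup_of_frequently_le hu (hv.isBoundedUnder_le.mono_le huv))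
  calc limsup u f ≤ limsup v f :=
        limsup_le_limsup huv (.of_frequently_ge hu) hv.isBoundedUnder_le
    _ = b := hv.limsup_eq

theorem liminf_le_of_le_comp_tendsto {l : Filter κ} [l.NeBot] {u : ι → ℝ} {φ : κ → ι}
    {w : κ → ℝ} {b : ℝ} (hu : IsBoundedUnder (· ≥ ·) f u) (hφ : Tendsto φ l f)
    (huw : ∀ᶠ k in l, u (φ k) ≤ w k) (hw : Tendsto w l (𝓝 b)) :
    liminf u f ≤ b := by
  refine le_of_forall_gt_imp_ge_of_dense fun c hc => liminf_le_of_frequently_le ?_ hu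
  refine hφ.frequently (Eventually.frequently ?_)
  filter_upwards [huw, hw.eventually (eventually_lt_nhds hc)] with k hk hwk
  exact hk.trans hwk.le

end LimitBounds

/-- `q` is the sequence of denominators of the continued fraction `[0; a 1, a 2, …]`. -/
structure IsDenominators (a q : ℕ → ℕ) : Prop where
  zero : q 0 = 1
  one : q 1 = a 1
  recurrence : ∀ n, 2 ≤ n → q n = a n * q (n - 1) + q (n - 2)

namespace IsDenominators

variable {a q : ℕ → ℕ}

theorem add_two (hq : IsDenominators a q) (n : ℕ) : q (n + 2) = a (n + 2) * q (n + 1) + q n :=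
  hq.recurrence (n + 2) le_add_self

theorem mul_le_succ (hq : IsDenominators a q) (n : ℕ) : a (n + 1) * q n ≤ q (n + 1) := by
  cases n with
  | zero => simp [hq.zero, hq.one]
  | succ n => rw [hq.add_two]; exact Nat.le_add_right _ _

theorem le_succ (hq : IsDenominators a q) (ha : ∀ n, 1 ≤ n → 1 ≤ a n) (n : ℕ) :
    q n ≤ q (n + 1) :=
  (Nat.le_mul_of_pos_left _ (ha _ n.succ_pos)).trans (hq.mul_le_succ n)

theorem monotone (hq : IsDenominators a q) (ha : ∀ n, 1 ≤ n → 1 ≤ a n) : Monotone q :=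
  monotone_nat_of_le_succ (hq.le_succ ha)

theorem one_le (hq : IsDenominators a q) (ha : ∀ n, 1 ≤ n → 1 ≤ a n) (n : ℕ) : 1 ≤ q n :=
  hq.zero ▸ hq.monotone ha n.zero_le

theorem self_le (hq : IsDenominators a q) (ha : ∀ n, 1 ≤ n → 1 ≤ a n) : ∀ n, n ≤ q n
  | 0 => Nat.zero_le _
  | 1 => hq.one ▸ ha 1 le_rfl
  | n + 2 => by
    have h1 := hq.self_le ha (n + 1)
    have h2 := hq.one_le ha n
    have h3 := Nat.le_mul_of_pos_left (q (n + 1)) (ha (n + 2) (by omega))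
    rw [hq.add_two]
    omega

theorem succ_le_mul (hq : IsDenominators a q) (ha : ∀ n, 1 ≤ n → 1 ≤ a n) (n : ℕ) :
    q (n + 1) ≤ (a (n + 1) + 1) * q n := by
  cases n with
  | zero => simp [hq.zero, hq.one]
  | succ n =>
    rw [hq.add_two, add_one_mul]
    exact Nat.add_le_add_left (hq.le_succ ha n) _

theorem tendsto_atTop (hq : IsDenominators a q) (ha : ∀ n, 1 ≤ n → 1 ≤ a n) :
    Tendsto q atTop atTop :=
  tendsto_atTop_mono (hq.self_le ha) tendsto_id

end IsDenominators

section SparseProduct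

variable {a s : ℕ → ℕ}

theorem prod_Ioc_le_of_eq_one (hs : Monotone s)
    (ha : ∀ n, 1 ≤ n → (¬ ∃ k, n = s k + 1) → a n = 1) (hpos : ∀ k, 1 ≤ a (s k + 1)) (m : ℕ) :
    ∏ i ∈ Ioc (s m) (s (m + 1)), a i ≤ a (s m + 1) := by
  calc ∏ i ∈ Ioc (s m) (s (m + 1)), a i
      = ∏ i ∈ Ioc (s m) (s (m + 1)), if s m + 1 = i then a i else 1 := by
        refine prod_congr rfl fun i hi => ?_
        rw [mem_Ioc] at hi
        split_ifs with hi'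
        · rfl
        refine ha i (by omega) ?_
        rintro ⟨k, rfl⟩
        have hmk := hs.reflect_lt (show s m < s k by omega)
        have hkm := hs.reflect_lt (show s k < s (m + 1) by omega)
        omega
    _ = if s m + 1 ∈ Ioc (s m) (s (m + 1)) then a (s m + 1) else 1 := prod_ite_eq _ _ _
    _ ≤ a (s m + 1) := by split_ifs <;> simp [hpos]

theorem prod_Icc_le_prod_range_of_eq_one (hs : Monotone s)
    (ha : ∀ n, 1 ≤ n → (¬ ∃ k, n = s k + 1) → a n = 1) (hpos : ∀ k, 1 ≤ a (s k + 1)) :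
    ∀ m, ∏ i ∈ Icc 1 (s m), a i ≤ ∏ k ∈ range m, a (s k + 1)
  | 0 => by
    refine (prod_eq_one fun i hi => ha i (mem_Icc.1 hi).1 ?_).le
    rintro ⟨k, rfl⟩
    have := hs k.zero_le
    simp only [mem_Icc] at hi
    omega
  | m + 1 => by
    have hsplit := prod_Ioc_consecutive a (Nat.zero_le (s m)) (hs (m.le_add_right 1))
    rw [← Icc_add_one_left_eq_Ioc 0 (s m), ← Icc_add_one_left_eq_Ioc 0 (s (m + 1)), zero_add]
      at hsplit
    rw [← hsplit, prod_range_succ]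
    exact Nat.mul_le_mul (prod_Icc_le_prod_range_of_eq_one hs ha hpos m)
      (prod_Ioc_le_of_eq_one hs ha hpos m)

end SparseProduct

structure IsLiouvilleConstruction (β : ℝ) (a q nk : ℕ → ℕ) : Prop
    extends IsDenominators a q where
  nk_one : nk 1 = q (nk 0)
  nk_succ : ∀ k, 1 ≤ k → nk (k + 1) = nk k + q (nk k)
  a_nk_succ : ∀ n k, n = nk k + 1 → a n = ⌈exp (β * q (nk k))⌉₊
  a_eq_one : ∀ n, 1 ≤ n → (¬ ∃ k, n = nk k + 1) → a n = 1

namespace IsLiouvilleConstruction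

variable {β : ℝ} {a q nk : ℕ → ℕ}

theorem one_le_a (h : IsLiouvilleConstruction β a q nk) (n : ℕ) (hn : 1 ≤ n) : 1 ≤ a n := by
  by_cases hspike : ∃ k, n = nk k + 1
  · obtain ⟨k, hk⟩ := hspike
    rw [h.a_nk_succ n k hk]
    exact Nat.one_le_ceil_iff.2 (Real.exp_pos _)
  · rw [h.a_eq_one n hn hspike]

theorem nk_le_succ (h : IsLiouvilleConstruction β a q nk) (k : ℕ) : nk k ≤ nk (k + 1) := by
  cases k with
  | zero => rw [h.nk_one]; exact h.self_le h.one_le_a _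
  | succ k => rw [h.nk_succ _ le_add_self]; exact Nat.le_add_right _ _

theorem nk_monotone (h : IsLiouvilleConstruction β a q nk) : Monotone nk :=
  monotone_nat_of_le_succ h.nk_le_succ

theorem nk_eq_sum (h : IsLiouvilleConstruction β a q nk) {m : ℕ} (hm : 1 ≤ m) :
    nk m = ∑ k ∈ range m, q (nk k) := by
  induction m, hm using Nat.le_induction with
  | base => simp [h.nk_one]
  | succ m hm ih => rw [h.nk_succ m hm, sum_range_succ, ← ih]

theorem two_pow_le_two_mul_nk (h : IsLiouvilleConstruction β a q nk) {m : ℕ} (hm : 1 ≤ m) :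
    2 ^ m ≤ 2 * nk m := by
  induction m, hm using Nat.le_induction with
  | base => rw [h.nk_one]; have := h.one_le h.one_le_a (nk 0); omega
  | succ m hm ih =>
    rw [h.nk_succ m hm, pow_succ]
    have := h.self_le h.one_le_a (nk m)
    omega

theorem self_le_nk (h : IsLiouvilleConstruction β a q nk) {m : ℕ} (hm : 1 ≤ m) : m ≤ nk m := by
  induction m, hm using Nat.le_induction with
  | base => rw [h.nk_one]; exact h.one_le h.one_le_a _
  | succ m hm ih => rw [h.nk_succ m hm]; have := h.one_le h.one_le_a (nk m); omega

theorem tendsto_nk (h : IsLiouvilleConstruction β a q nk) : Tendsto nk atTop atTop :=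
  tendsto_atTop_mono' atTop (eventually_ge_atTop 1 |>.mono fun _ => h.self_le_nk) tendsto_id

theorem tendsto_div_nk (h : IsLiouvilleConstruction β a q nk) :
    Tendsto (fun m : ℕ => (m : ℝ) / nk m) atTop (𝓝 0) := by
  have hpow := (tendsto_pow_const_div_const_pow_of_one_lt 1 one_lt_two).const_mul 2
  rw [mul_zero] at hpow
  refine tendsto_of_tendsto_of_tendsto_of_le_of_le' tendsto_const_nhds hpow
    (.of_forall fun m => by positivity) ?_
  filter_upwards [eventually_ge_atTop 1] with m hm
  have hnk : (2 : ℝ) ^ m ≤ 2 * nk m := by exact_mod_cast h.two_pow_le_two_mul_nk hm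
  have hnk_pos : (0 : ℝ) < nk m := Nat.cast_pos.2 (hm.trans (h.self_le_nk hm))
  rw [pow_one, div_le_iff₀ hnk_pos]
  calc (m : ℝ) = 2 * (m / 2 ^ m) * (2 ^ m / 2) := by field_simp
    _ ≤ 2 * (m / 2 ^ m) * nk m := by gcongr; linarith

theorem a_succ_le (h : IsLiouvilleConstruction β a q nk) (n : ℕ) :
    (a (n + 1) : ℝ) ≤ exp (β * q n) + 1 := by
  by_cases hspike : ∃ k, n + 1 = nk k + 1
  · obtain ⟨k, hk⟩ := hspike
    rw [h.a_nk_succ _ k hk, show nk k = n by omega]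
    exact (Nat.ceil_lt_add_one (Real.exp_pos _).le).le
  · rw [h.a_eq_one _ le_add_self hspike, Nat.cast_one]
    linarith [Real.exp_pos (β * q n)]

theorem a_nk_succ_le (h : IsLiouvilleConstruction β a q nk) (hβ : 0 ≤ β) (k : ℕ) :
    (a (nk k + 1) : ℝ) ≤ exp (β * q (nk k) + 1) := by
  have hexp : 1 ≤ exp (β * q (nk k)) := Real.one_le_exp (by positivity)
  calc (a (nk k + 1) : ℝ) ≤ exp (β * q (nk k)) + 1 := h.a_succ_le _
    _ ≤ exp (β * q (nk k)) * 2 := by linarith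
    _ ≤ exp (β * q (nk k)) * exp 1 := by
        gcongr; linarith [Real.add_one_le_exp (1 : ℝ)]
    _ = exp (β * q (nk k) + 1) := (Real.exp_add _ _).symm

theorem q_succ_le (h : IsLiouvilleConstruction β a q nk) (hβ : 0 ≤ β) (n : ℕ) :
    (q (n + 1) : ℝ) ≤ 3 * q n * exp (β * q n) := by
  have hexp : 1 ≤ exp (β * q n) := Real.one_le_exp (by positivity)
  calc (q (n + 1) : ℝ) ≤ (a (n + 1) + 1) * q n := by exact_mod_cast h.succ_le_mul h.one_le_a n
    _ ≤ (exp (β * q n) + 2) * q n := by gcongr ?_ * _; linarith [h.a_succ_le n]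
    _ ≤ 3 * q n * exp (β * q n) := by nlinarith [(Nat.cast_nonneg (q n) : (0 : ℝ) ≤ q n)]

theorem exp_le_q_nk_succ (h : IsLiouvilleConstruction β a q nk) (k : ℕ) :
    exp (β * q (nk k)) ≤ q (nk k + 1) := by
  calc exp (β * q (nk k)) ≤ a (nk k + 1) := by
        rw [h.a_nk_succ _ k rfl]; exact Nat.le_ceil _
    _ ≤ a (nk k + 1) * q (nk k) := by
        exact_mod_cast Nat.le_mul_of_pos_right _ (h.one_le h.one_le_a _)
    _ ≤ q (nk k + 1) := by exact_mod_cast h.mul_le_succ _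

theorem limsup_log_q_succ_div (h : IsLiouvilleConstruction β a q nk) (hβ : 0 ≤ β) :
    limsup (fun n => log (q (n + 1)) / q n) atTop = β := by
  have hq_pos (n : ℕ) : (0 : ℝ) < q n := Nat.cast_pos.2 (h.one_le h.one_le_a n)
  have hq_top : Tendsto (fun n => (q n : ℝ)) atTop atTop :=
    tendsto_natCast_atTop_atTop.comp (h.tendsto_atTop h.one_le_a)
  refine limsup_eq_of_frequently_ge_of_le_tendsto
    (v := fun n => β + (log 3 / q n + log (q n) / q n)) ?lower (.of_forall fun n => ?upper) ?limit
  case lower =>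
    refine h.tendsto_nk.frequently (.of_forall fun k => ?_)
    rw [le_div_iff₀ (hq_pos _), ← Real.log_exp (β * q (nk k))]
    exact Real.log_le_log (Real.exp_pos _) (h.exp_le_q_nk_succ k)
  case upper =>
    have hlog : log (q (n + 1)) ≤ log 3 + log (q n) + β * q n := by
      calc log (q (n + 1)) ≤ log (3 * q n * exp (β * q n)) :=
            Real.log_le_log (hq_pos _) (h.q_succ_le hβ n)
        _ = log 3 + log (q n) + β * q n := by
            rw [Real.log_mul (by have := hq_pos n; positivity) (Real.exp_pos _).ne',
              Real.log_mul three_ne_zero (hq_pos n).ne', Real.log_exp]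
    rw [div_le_iff₀ (hq_pos n), ← add_div, add_mul, div_mul_cancel₀ _ (hq_pos n).ne']
    linarith
  case limit =>
    simpa using tendsto_const_nhds.add ((tendsto_const_nhds.div_atTop hq_top).add
      (Real.isLittleO_log_id_atTop.tendsto_div_nhds_zero.comp hq_top))

theorem prod_a_le_exp (h : IsLiouvilleConstruction β a q nk) (hβ : 0 ≤ β) {m : ℕ} (hm : 1 ≤ m) :
    ∏ i ∈ Icc 1 (nk m), (a i : ℝ) ≤ exp (β * nk m + m) := by
  have hprod := prod_Icc_le_prod_range_of_eq_one h.nk_monotone h.a_eq_one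
    (fun k => h.one_le_a _ le_add_self) m
  calc ∏ i ∈ Icc 1 (nk m), (a i : ℝ) ≤ ∏ k ∈ range m, (a (nk k + 1) : ℝ) := by
        exact_mod_cast hprod
    _ ≤ ∏ k ∈ range m, exp (β * q (nk k) + 1) :=
        prod_le_prod (fun _ _ => Nat.cast_nonneg _) fun k _ => h.a_nk_succ_le hβ k
    _ = exp (β * nk m + m) := by
        rw [← Real.exp_sum, sum_add_distrib, ← mul_sum, h.nk_eq_sum hm]
        simp

theorem liminf_rpow_prod_a_le (h : IsLiouvilleConstruction β a q nk) (hβ : 0 ≤ β) :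
    liminf (fun k => (∏ i ∈ Icc 1 k, (a i : ℝ)) ^ ((1 : ℝ) / k)) atTop ≤ exp β := by
  have hprod_nonneg (k : ℕ) : 0 ≤ ∏ i ∈ Icc 1 k, (a i : ℝ) :=
    prod_nonneg fun _ _ => Nat.cast_nonneg _
  refine liminf_le_of_le_comp_tendsto (w := fun m => exp (β + m / nk m))
    (isBoundedUnder_of ⟨0, fun k => Real.rpow_nonneg (hprod_nonneg k) _⟩) h.tendsto_nk ?_ ?_
  · filter_upwards [eventually_ge_atTop 1] with m hm
    have hnk_pos : (0 : ℝ) < nk m := Nat.cast_pos.2 (hm.trans (h.self_le_nk hm))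
    calc (∏ i ∈ Icc 1 (nk m), (a i : ℝ)) ^ ((1 : ℝ) / nk m)
        ≤ exp (β * nk m + m) ^ ((1 : ℝ) / nk m) :=
          Real.rpow_le_rpow (hprod_nonneg _) (h.prod_a_le_exp hβ hm) (by positivity)
      _ = exp (β + m / nk m) := by
          rw [← Real.exp_mul]; congr 1; field_simp
  · simpa using (tendsto_const_nhds.add h.tendsto_div_nk).rexp

end IsLiouvilleConstruction

theorem stmt_16_general (β : ℝ) (hβ : 0 < β)
    (a q nk : ℕ → ℕ)
    (hq0 : q 0 = 1) (hq1 : q 1 = a 1)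
    (hqrec : ∀ n, 2 ≤ n → q n = a n * q (n - 1) + q (n - 2))
    (hnk1 : nk 1 = q (nk 0))
    (hnkrec : ∀ k, 1 ≤ k → nk (k + 1) = nk k + q (nk k))
    (ha2 : ∀ n k, n = nk k + 1 → a n = ⌈Real.exp (β * q (nk k))⌉₊)
    (ha3 : ∀ n, 1 ≤ n → (¬ ∃ k, n = nk k + 1) → a n = 1) :
    Filter.limsup (fun n => Real.log (q (n + 1)) / q n) Filter.atTop = β ∧
    Filter.liminf (fun k => (∏ i ∈ Finset.Icc 1 k, (a i : ℝ)) ^ ((1 : ℝ) / k))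
        Filter.atTop ≤ Real.exp β := by
  have h : IsLiouvilleConstruction β a q nk := ⟨⟨hq0, hq1, hqrec⟩, hnk1, hnkrec, ha2, ha3⟩
  exact ⟨h.limsup_log_q_succ_div hβ.le, h.liminf_rpow_prod_a_le hβ.le⟩

/-- Construction of a frequency with `β(α) = β > 0` but `K_*(α) ≤ e^β < ∞`:
with continued fraction coefficients `a_i = 1` for `i ≤ n₀`, denominators
`q_n = a_n q_{n−1} + q_{n−2}`, the indices `n_k` defined by `n_0 = n₀`,
`n_1 = q_{n_0}`, `n_{k+1} = n_k + q_{n_k}`, and `a_n = ⌈e^{β q_{n_k}}⌉` if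
`n = n_k + 1`, `a_n = 1` otherwise, one has
`limsup (log q_{n+1})/q_n = β` and `liminf (a_1 ⋯ a_k)^{1/k} ≤ e^β`. -/
theorem stmt_16 (β : ℝ) (hβ : 0 < β) (n₀ : ℕ) (hn₀ : 2 ≤ n₀)
    (a q nk : ℕ → ℕ)
    (hq0 : q 0 = 1) (hq1 : q 1 = a 1)
    (hqrec : ∀ n, 2 ≤ n → q n = a n * q (n - 1) + q (n - 2))
    (hnk0 : nk 0 = n₀) (hnk1 : nk 1 = q (nk 0))
    (hnkrec : ∀ k, 1 ≤ k → nk (k + 1) = nk k + q (nk k))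
    (ha1 : ∀ i, 1 ≤ i → i ≤ n₀ → a i = 1)
    (ha2 : ∀ n k, n = nk k + 1 → a n = ⌈Real.exp (β * q (nk k))⌉₊)
    (ha3 : ∀ n, 1 ≤ n → (¬ ∃ k, n = nk k + 1) → a n = 1) :
    Filter.limsup (fun n => Real.log (q (n + 1)) / q n) Filter.atTop = β ∧
    Filter.liminf (fun k => (∏ i ∈ Finset.Icc 1 k, (a i : ℝ)) ^ ((1 : ℝ) / k))
        Filter.atTop ≤ Real.exp β :=
  stmt_16_general β hβ a q nk hq0 hq1 hqrec hnk1 hnkrec ha2 ha3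
end

section
/- Let α be irrational with continued fraction denominators q_n, let β > 0 and suppose q satisfies ‖qα‖ < e^{−βq/2}, where ‖x‖ denotes the distance of x to the nearest integer. Let θ ∈ 𝕋 be α-Diophantine: there exist γ > 0 and τ > 1 with ‖θ + mα‖ ≥ γ/(|m|+1)^τ for all m ∈ ℤ. Set N = [e^{βq/4}]. Then for all sufficiently large q (depending on γ, τ, β): for every 0 ≤ m ≤ q and every 0 ≤ j ≤ N, χ_{[1−α,1)}(θ + mα mod 1) = χ_{[1−α,1)}(θ + mα + jqα mod 1). -/
open Real

lemma key_lemma (α x δ ε : ℝ) (hα : α ∈ Set.Ioo (0:ℝ) 1) (hε : 0 < ε)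
    (h1 : ∀ p : ℤ, ε ≤ |x - p|) (h2 : ∀ p : ℤ, ε ≤ |x + α - p|) (hδ : |δ| < ε) :
    (Int.fract x ∈ Set.Ico (1 - α) 1 ↔ Int.fract (x + δ) ∈ Set.Ico (1 - α) 1) := by
  obtain ⟨hα0, hα1⟩ := hα
  obtain ⟨hδ1, hδ2⟩ := abs_lt.1 hδ
  set f := Int.fract x with hf
  have hf0 : 0 ≤ f := Int.fract_nonneg x
  have hf1 : f < 1 := Int.fract_lt_one x
  have hfl : (⌊x⌋ : ℝ) = x - f := by rw [hf, Int.fract]; ring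
  have e1 : ε ≤ f := by
    have := h1 ⌊x⌋
    rwa [Int.self_sub_floor, ← hf, abs_of_nonneg hf0] at this
  have e2 : ε ≤ 1 - f := by
    have := h1 (⌊x⌋ + 1)
    have hx : x - ((⌊x⌋ : ℤ) + 1 : ℤ) = f - 1 := by push_cast; rw [hfl]; ring
    rw [hx, abs_of_nonpos (by linarith)] at this
    linarith
  have e3 : ε ≤ |f - (1 - α)| := by
    have := h2 (⌊x⌋ + 1)
    have hx : x + α - ((⌊x⌋ : ℤ) + 1 : ℤ) = f - (1 - α) := by push_cast; rw [hfl]; ring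
    rwa [hx] at this
  have hfr : Int.fract (x + δ) = f + δ := by
    have hx : x + δ = (f + δ) + (⌊x⌋ : ℤ) := by push_cast; rw [hfl]; ring
    rw [hx, Int.fract_add_intCast, Int.fract_eq_self.2 ⟨by linarith, by linarith⟩]
  rw [hfr]
  simp only [Set.mem_Ico]
  rcases le_abs.1 e3 with h | h <;>
    constructor <;> rintro ⟨h4, h5⟩ <;> constructor <;> linarith

/-- For a Sturmian potential with `‖qα‖ < e^{−βq/2}` and an `α`-Diophantine phase `θ`,
for all large `q`: for every `0 ≤ m ≤ q` and `0 ≤ j ≤ N = [e^{βq/4}]`, the points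
`θ + mα` and `θ + mα + jqα` lie on the same side of the partition by `[1−α, 1)`. -/
theorem stmt_17 (α : ℝ) (hirr : Irrational α) (hα : α ∈ Set.Ioo (0 : ℝ) 1)
    (β : ℝ) (hβ : 0 < β) (θ : ℝ) (γ τ : ℝ) (hγ : 0 < γ) (hτ : 1 < τ)
    (hdioph : ∀ m : ℤ, ∀ p : ℤ, γ / ((|m| + 1 : ℝ) ^ τ) ≤ |θ + m * α - p|) :
    ∃ Q : ℕ, ∀ q : ℕ, Q ≤ q →
      (∃ p : ℤ, |q * α - p| < Real.exp (-β * q / 2)) →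
      ∀ m : ℕ, m ≤ q → ∀ j : ℕ, j ≤ ⌊Real.exp (β * q / 4)⌋₊ →
        (Int.fract (θ + m * α) ∈ Set.Ico (1 - α) 1 ↔
          Int.fract (θ + m * α + j * q * α) ∈ Set.Ico (1 - α) 1) := by
  have ht : Filter.Tendsto (fun q : ℕ => ((q : ℝ) + 2) ^ τ * Real.exp (-β * q / 4))
      Filter.atTop (nhds 0) := by
    have h0 : Filter.Tendsto (fun x : ℝ => x ^ τ * Real.exp (-(β/4) * x) * Real.exp (β/2))
        Filter.atTop (nhds 0) := by
      simpa using
        (tendsto_rpow_mul_exp_neg_mul_atTop_nhds_zero τ (β/4) (by positivity)).mul_const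
          (Real.exp (β/2))
    have h1 : Filter.Tendsto (fun q : ℕ => ((q : ℝ) + 2)) Filter.atTop Filter.atTop :=
      Filter.tendsto_atTop_add_const_right _ 2 tendsto_natCast_atTop_atTop
    have := h0.comp h1
    convert this using 2 with q
    simp only [Function.comp_apply]
    rw [mul_assoc, ← Real.exp_add]
    ring_nf
  have hev : ∀ᶠ q : ℕ in Filter.atTop, ((q : ℝ) + 2) ^ τ * Real.exp (-β * q / 4) < γ :=
    ht.eventually (gt_mem_nhds hγ)
  obtain ⟨Q, hQ⟩ := Filter.eventually_atTop.1 hev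
  refine ⟨Q, fun q hq ⟨p, hp⟩ m hm j hj => ?_⟩
  set ε : ℝ := γ / ((q : ℝ) + 2) ^ τ with hε
  have hqpos : (0 : ℝ) < ((q : ℝ) + 2) ^ τ := by positivity
  have hεpos : 0 < ε := by positivity
  -- Diophantine bounds with ε
  have hbound : ∀ k : ℤ, 0 ≤ k → k ≤ (q : ℤ) + 1 → ∀ r : ℤ, ε ≤ |θ + k * α - r| := by
    intro k hk0 hk1 r
    refine le_trans ?_ (hdioph k r)
    have h5 : ((|k| : ℤ) : ℝ) + 1 ≤ (q : ℝ) + 2 := by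
      rw [abs_of_nonneg hk0]
      have : (k : ℝ) ≤ (q : ℝ) + 1 := by exact_mod_cast hk1
      push_cast at this ⊢
      linarith
    have hpow : (((|k| : ℤ) : ℝ) + 1) ^ τ ≤ ((q : ℝ) + 2) ^ τ :=
      Real.rpow_le_rpow (by positivity) h5 (by linarith)
    rw [hε]
    exact div_le_div_of_nonneg_left hγ.le (by positivity) hpow
  have h1 : ∀ r : ℤ, ε ≤ |(θ + m * α) - r| := by
    intro r
    have := hbound m (by positivity) (by exact_mod_cast Nat.le_succ_of_le hm) r
    simpa using this
  have h2 : ∀ r : ℤ, ε ≤ |(θ + m * α) + α - r| := by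
    intro r
    have := hbound (m + 1) (by positivity) (by exact_mod_cast Nat.succ_le_succ hm) r
    have he : θ + ((m : ℤ) + 1 : ℤ) * α - r = (θ + m * α) + α - r := by push_cast; ring
    rwa [he] at this
  -- the perturbation
  set δ : ℝ := (j : ℝ) * (q * α - p) with hδdef
  have hjN : (j : ℝ) ≤ Real.exp (β * q / 4) := by
    calc (j : ℝ) ≤ (⌊Real.exp (β * q / 4)⌋₊ : ℝ) := by exact_mod_cast hj
    _ ≤ Real.exp (β * q / 4) := Nat.floor_le (Real.exp_pos _).le
  have hδsmall : |δ| < ε := by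
    have h3 : |δ| ≤ Real.exp (β * q / 4) * Real.exp (-β * q / 2) := by
      rw [hδdef, abs_mul, abs_of_nonneg (by positivity : (0:ℝ) ≤ (j:ℝ))]
      exact mul_le_mul hjN hp.le (abs_nonneg _) (Real.exp_pos _).le
    rw [← Real.exp_add] at h3
    have h4 : β * q / 4 + -β * q / 2 = -β * q / 4 := by ring
    rw [h4] at h3
    have h5 : Real.exp (-β * q / 4) < ε := by
      rw [hε, lt_div_iff₀ hqpos, mul_comm]
      exact hQ q hq
    linarith
  have hfr : Int.fract (θ + m * α + j * q * α) = Int.fract ((θ + m * α) + δ) := by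
    have : θ + m * α + j * q * α = ((θ + m * α) + δ) + ((j : ℤ) * p : ℤ) := by
      rw [hδdef]; push_cast; ring
    rw [this, Int.fract_add_intCast]
  rw [hfr]
  exact key_lemma α (θ + m * α) δ ε hα hεpos h1 h2 hδsmall
end
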